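/- For a ∈ ℝ^M with M ≥ 2, if max_i |a_i| ≤ ε then for all indices i, the product softmax(a)_i · (1 - softmax(a)_i) ≥ (M-1) e^{-4ε} / M², i.e., it is bounded below by a positive constant depending only on M and ε. -/

import Mathlib

open Real Finset

noncomputable def softmax {M : ℕ} (a : Fin M → ℝ) (i : Fin M) : ℝ :=
  Real.exp (a i) / ∑ j, Real.exp (a j)

/-!
Write `x = exp aᵢ` and `S = ∑ⱼ exp aⱼ`, so that `softmax(a)ᵢ (1 - softmax(a)ᵢ) = x (S - x) / S²`.
Every weight lies in `[e^{-ε}, e^{ε}]`, hence `x ≥ e^{-ε}`, `S - x ≥ (M - 1) e^{-ε}` and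
`S ≤ M e^{ε}`; combining the three bounds gives `(M - 1) e^{-2ε} / (M² e^{2ε})`.
-/

theorem card_sub_one_mul_le_sum_sub {ι : Type*} [Fintype ι] (w : ι → ℝ) {lo : ℝ}
    (hlo : ∀ j, lo ≤ w j) (i : ι) :
    ((Fintype.card ι : ℝ) - 1) * lo ≤ ∑ j, w j - w i := by
  classical
  have hcard : ((univ.erase i).card : ℝ) = Fintype.card ι - 1 := by
    rw [card_erase_of_mem (mem_univ i), card_univ,
      Nat.cast_sub (Fintype.card_pos_iff.mpr ⟨i⟩), Nat.cast_one]
  rw [← sum_erase_eq_sub (mem_univ i), ← hcard, ← nsmul_eq_mul]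
  exact card_nsmul_le_sum _ _ _ fun j _ => hlo j

theorem le_div_sum_mul_one_sub_div_sum {ι : Type*} [Fintype ι] (w : ι → ℝ) {lo hi : ℝ}
    (hlo_pos : 0 < lo) (hlo : ∀ j, lo ≤ w j) (hhi : ∀ j, w j ≤ hi) (i : ι) :
    ((Fintype.card ι : ℝ) - 1) * lo ^ 2 / (Fintype.card ι * hi) ^ 2 ≤
      w i / (∑ j, w j) * (1 - w i / ∑ j, w j) := by
  set S := ∑ j, w j
  have hS_pos : 0 < S := sum_pos (fun j _ => hlo_pos.trans_le (hlo j)) ⟨i, mem_univ i⟩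
  have hS_le : S ≤ Fintype.card ι * hi := by
    simpa using sum_le_card_nsmul univ w hi fun j _ => hhi j
  have hrest := card_sub_one_mul_le_sum_sub w hlo i
  have hcard : (0 : ℝ) ≤ Fintype.card ι - 1 := by
    rw [sub_nonneg, Nat.one_le_cast]
    exact Fintype.card_pos_iff.mpr ⟨i⟩
  calc ((Fintype.card ι : ℝ) - 1) * lo ^ 2 / (Fintype.card ι * hi) ^ 2
      ≤ ((Fintype.card ι : ℝ) - 1) * lo ^ 2 / S ^ 2 := by gcongr
    _ = lo * ((Fintype.card ι - 1) * lo) / S ^ 2 := by ring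
    _ ≤ w i * (S - w i) / S ^ 2 := by
        gcongr
        exacts [hlo_pos.le.trans (hlo i), hlo i]
    _ = w i / S * (1 - w i / S) := by field_simp

theorem softmax_product_lower_bound_general {M : ℕ} (ε : ℝ)
    (a : Fin M → ℝ) (ha : ∀ j, |a j| ≤ ε) :
    ∀ i : Fin M,
      ((M : ℝ) - 1) * Real.exp (-(4 * ε)) / (M : ℝ) ^ 2 ≤
        softmax a i * (1 - softmax a i) := by
  intro i
  have hexp : Real.exp (-(4 * ε)) / (M : ℝ) ^ 2 = Real.exp (-ε) ^ 2 / (M * Real.exp ε) ^ 2 := by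
    rw [mul_pow, ← Real.exp_nat_mul, ← Real.exp_nat_mul, div_mul_eq_div_div_swap,
      ← Real.exp_sub]
    ring_nf
  rw [mul_div_assoc, hexp, ← mul_div_assoc]
  simpa [softmax] using le_div_sum_mul_one_sub_div_sum (fun j => Real.exp (a j)) (Real.exp_pos (-ε))
    (fun j => Real.exp_le_exp.2 (neg_le_of_abs_le (ha j)))
    (fun j => Real.exp_le_exp.2 (le_of_abs_le (ha j))) i

/-- If `M ≥ 2` and all entries of `a` are bounded by `ε` in absolute value, then
each product `softmax(a)_i (1 - softmax(a)_i)` is at least `(M-1) e^{-4ε} / M²`. -/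
theorem softmax_product_lower_bound {M : ℕ} (hM : 2 ≤ M) (ε : ℝ) (hε : 0 ≤ ε)
    (a : Fin M → ℝ) (ha : ∀ j, |a j| ≤ ε) :
    ∀ i : Fin M,
      ((M : ℝ) - 1) * Real.exp (-(4 * ε)) / (M : ℝ) ^ 2 ≤
        softmax a i * (1 - softmax a i) :=
  softmax_product_lower_bound_general ε a ha
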